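/- Equip ℂ³ with the sup norm and let W = {(x, y, z) ∈ ℂ³ : z = x + y} = span{(1,0,1), (0,1,1)}. Then there is no continuous linear projection of norm 1 from ℂ³ onto W: every linear map p : ℂ³ → ℂ³ with p ∘ p = p and range p = W satisfies ‖p‖ > 1 (for the operator norm induced by the sup norm). -/

import Mathlib

/-!
A projection `p` onto `W` fixes `W` and is therefore determined by `q = p e₂ ∈ W`:
`p v = v - (v₂ - v₀ - v₁) • (e₂ - q)`. If `‖p‖ ≤ 1`, the images of the unit vectors
`(1, 1, 1)`, `(1, -1, 1)`, `(-1, 1, 1)` give `|1 ± q₀| ≤ 1` and `|1 ± q₁| ≤ 1`, so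
`q₀ = q₁ = 0` by the parallelogram law, hence `q = 0` and `p (1, 1, 1) = (1, 1, 2)` has norm `2`.
-/

theorem eq_zero_of_norm_add_le_of_norm_sub_le {𝕜 E : Type*} [RCLike 𝕜] [NormedAddCommGroup E]
    [InnerProductSpace 𝕜 E] {x y : E} (hadd : ‖x + y‖ ≤ ‖x‖) (hsub : ‖x - y‖ ≤ ‖x‖) : y = 0 := by
  have hpar := parallelogram_law_with_norm 𝕜 x y
  refine norm_le_zero_iff.mp ?_
  nlinarith [mul_self_le_mul_self (norm_nonneg _) hadd, mul_self_le_mul_self (norm_nonneg _) hsub,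
    norm_nonneg y]

theorem apply_eq_sub_smul_of_fixes_sumPlane {R : Type*} [CommRing R]
    (p : (Fin 3 → R) →ₗ[R] (Fin 3 → R)) (hfix : ∀ w : Fin 3 → R, w 2 = w 0 + w 1 → p w = w)
    (v : Fin 3 → R) :
    p v = v - (v 2 - v 0 - v 1) • (Pi.single 2 1 - p (Pi.single 2 1)) := by
  set c := v 2 - v 0 - v 1
  have hw : p (v - c • Pi.single 2 1) = v - c • Pi.single 2 1 := hfix _ (by simp [c]; ring)
  calc p v = p (v - c • Pi.single 2 1) + c • p (Pi.single 2 1) := by simp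
    _ = _ := by rw [hw, smul_sub]; abel

/-- Equip `ℂ³` (as `Fin 3 → ℂ` with the sup norm) and let
`W = {(x, y, z) : z = x + y}`. Then every (continuous) linear projection `p` of `ℂ³`
with range `W` satisfies `‖p‖ > 1`: there is no norm-one linear projection onto `W`. -/
theorem stmt5
    (W : Set (Fin 3 → ℂ)) (hW : W = {v : Fin 3 → ℂ | v 2 = v 0 + v 1})
    (p : (Fin 3 → ℂ) →L[ℂ] (Fin 3 → ℂ))
    (hproj : ∀ v, p (p v) = p v) (hrange : Set.range p = W) :
    1 < ‖p‖ := by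
  subst hW
  by_contra! hle
  have hfix : ∀ w : Fin 3 → ℂ, w 2 = w 0 + w 1 → p w = w := fun w hw => by
    obtain ⟨u, rfl⟩ : w ∈ Set.range p := hrange ▸ hw
    exact hproj u
  have hbound : ∀ v : Fin 3 → ℂ, ‖v‖ ≤ 1 → ∀ i, ‖p v i‖ ≤ 1 := fun v hv i =>
    (norm_le_pi_norm _ i).trans ((p.le_of_opNorm_le_of_le hle hv).trans (by norm_num))
  have hp : ∀ v, p v = v - (v 2 - v 0 - v 1) • (Pi.single 2 1 - p (Pi.single 2 1)) :=
    apply_eq_sub_smul_of_fixes_sumPlane p.toLinearMap hfix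
  set q := p (Pi.single 2 1)
  have hq2 : q 2 = q 0 + q 1 := (hrange ▸ Set.mem_range_self _ : q ∈ {v | v 2 = v 0 + v 1})
  have h111 := hbound ![1, 1, 1] (by simp [pi_norm_le_iff_of_nonneg, Fin.forall_fin_succ])
  have h1m1 := hbound ![1, -1, 1] (by simp [pi_norm_le_iff_of_nonneg, Fin.forall_fin_succ])
  have hm11 := hbound ![-1, 1, 1] (by simp [pi_norm_le_iff_of_nonneg, Fin.forall_fin_succ])
  rw [hp] at h111 h1m1 hm11
  have hq0 : q 0 = 0 := eq_zero_of_norm_add_le_of_norm_sub_le (𝕜 := ℂ) (x := 1)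
    (by simpa using h1m1 0) (by simpa using h111 0)
  have hq1 : q 1 = 0 := eq_zero_of_norm_add_le_of_norm_sub_le (𝕜 := ℂ) (x := 1)
    (by simpa using hm11 1) (by simpa using h111 1)
  have h2 := h111 2
  simp [hq2, hq0, hq1] at h2
  norm_num at h2
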